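/- Fix 1 < α < 2, let q₀(t) = log(e/t), ρ(s) = (1 + ((2−α)/(α−1)) ∫_s^1 dt/(t^{1/(α−1)} q₀(t)^{1/(α−1)}))^{(α−1)/(α−2)} for s ∈ (0,1], and f(z) = (z/|z|)·ρ(|z|) for z ∈ 𝔻\{0}, f(0) = 0. Then for every z ∈ 𝔻\{0}, the inner dilatation of order α satisfies K_{I,α}(z,f) = q₀(|z|) = log(e/|z|). -/

import Mathlib

/-!
STATEMENT 14: For `1 < α < 2` and the radial mapping `f(z) = (z/|z|)ρ(|z|)`, `f(0)=0`,
for every `z ∈ 𝔻 \ {0}` the inner dilatation of order `α` satisfies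
`K_{I,α}(z,f) = q₀(|z|) = log(e/|z|)`.
-/

open MeasureTheory Set ENNReal

noncomputable section

/-- The kernel `t ↦ 1/(t^{1/(α-1)} (log(e/t))^{1/(α-1)})`. -/
def kern (α : ℝ) (t : ℝ) : ℝ :=
  1 / (t ^ (1 / (α - 1)) * (Real.log (Real.exp 1 / t)) ^ (1 / (α - 1)))

/-- The radial profile `ρ`. -/
def rho (α : ℝ) (s : ℝ) : ℝ :=
  (1 + ((2 - α) / (α - 1)) * ∫ t in s..1, kern α t) ^ ((α - 1) / (α - 2))

/-- The radial mapping `f(z) = (z/|z|)·ρ(|z|)`, `f(0) = 0`. -/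
def fmap (α : ℝ) (z : ℂ) : ℂ :=
  if z = 0 then 0 else (z / (‖z‖ : ℂ)) * (rho α ‖z‖ : ℂ)

/-- `f_z = (f_x - i f_y)/2`. -/
def wirtP (f : ℂ → ℂ) (z : ℂ) : ℂ :=
  (fderiv ℝ f z 1 - Complex.I * fderiv ℝ f z Complex.I) / 2

/-- `f_z̄ = (f_x + i f_y)/2`. -/
def wirtM (f : ℂ → ℂ) (z : ℂ) : ℂ :=
  (fderiv ℝ f z 1 + Complex.I * fderiv ℝ f z Complex.I) / 2

/-- Jacobian `J(z,f) = |f_z|² - |f_z̄|²`. -/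
def jacF (f : ℂ → ℂ) (z : ℂ) : ℝ :=
  ‖wirtP f z‖ ^ 2 - ‖wirtM f z‖ ^ 2

open Classical in
/-- The inner dilatation of order `p`. -/
def innerDil (p : ℝ) (f : ℂ → ℂ) (z : ℂ) : ℝ≥0∞ :=
  if jacF f z ≠ 0 then
    ENNReal.ofReal ((‖wirtP f z‖ ^ 2 - ‖wirtM f z‖ ^ 2) /
      (‖wirtP f z‖ - ‖wirtM f z‖) ^ p)
  else if DifferentiableAt ℝ f z ∧ fderiv ℝ f z = 0 then 1 else ⊤

/-!
For a radial map `f(z) = (z/|z|) ρ(|z|)` with `r = |z|`, one computes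
`f_z = (ρ/r + ρ')/2` and `f_z̄ = (z/|z|)² (ρ' - ρ/r)/2`.  When `0 < ρ'` and `r ρ' ≤ ρ` this gives
`|f_z| - |f_z̄| = ρ'` and `J = ρ ρ'/r`, so `K_{I,α} = ρ ρ'^{1-α} / r`.  The profile `ρ` is the
solution of `ρ' = (ρ / (r q₀(r)))^{1/(α-1)}`, which is exactly the equation `ρ ρ'^{1-α} / r = q₀`.
The side condition `r ρ' ≤ ρ` amounts to `r · kern(r) ≤ 1 + ((2-α)/(α-1)) ∫_r^1 kern`; it follows
by bounding `kern(t) ≥ q₀(r)^{-1/(α-1)} t^{-1/(α-1)}` on `[r, 1]`, since `q₀` is decreasing.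
-/

open Filter Topology ComplexConjugate

theorem hasFDerivAt_norm_of_ne_zero {E : Type*} [NormedAddCommGroup E] [InnerProductSpace ℝ E]
    {x : E} (hx : x ≠ 0) : HasFDerivAt (fun y : E => ‖y‖) (‖x‖⁻¹ • innerSL ℝ x) x := by
  have h := (hasStrictFDerivAt_norm_sq x).hasFDerivAt.sqrt (by positivity)
  simp only [Real.sqrt_sq (norm_nonneg _)] at h
  convert h using 1
  ext v
  simp only [FunLike.coe_smul, Pi.smul_apply, innerSL_apply_apply, smul_eq_mul, two_smul,
    add_apply]
  field_simp
  ring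

theorem hasFDerivAt_smul_norm {E : Type*} [NormedAddCommGroup E] [InnerProductSpace ℝ E]
    {g : ℝ → ℝ} {g' : ℝ} {x : E} (hx : x ≠ 0) (hg : HasDerivAt g g' ‖x‖) :
    HasFDerivAt (fun y : E => g ‖y‖ • y)
      (g ‖x‖ • ContinuousLinearMap.id ℝ E + ((g' * ‖x‖⁻¹) • innerSL ℝ x).smulRight x) x := by
  convert (hg.comp_hasFDerivAt x (hasFDerivAt_norm_of_ne_zero hx)).smul (hasFDerivAt_id x) using 1
  · rfl
  · rw [mul_smul]
    rfl

section Wirtinger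

variable {f : ℂ → ℂ} {z P Q : ℂ}

theorem wirtP_eq_of_fderiv_apply (h : ∀ v, fderiv ℝ f z v = P * v + Q * conj v) :
    wirtP f z = P := by
  rw [wirtP, h, h]
  simp only [map_one, Complex.conj_I]
  linear_combination (Q - P) / 2 * Complex.I_mul_I

theorem wirtM_eq_of_fderiv_apply (h : ∀ v, fderiv ℝ f z v = P * v + Q * conj v) :
    wirtM f z = Q := by
  rw [wirtM, h, h]
  simp only [map_one, Complex.conj_I]
  linear_combination (P - Q) / 2 * Complex.I_mul_I

theorem fderiv_smul_norm_apply {g : ℝ → ℝ} {g' : ℝ} (hz : z ≠ 0) (hg : HasDerivAt g g' ‖z‖)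
    (v : ℂ) :
    fderiv ℝ (fun w : ℂ => g ‖w‖ • w) z v =
      ((g ‖z‖ + ‖z‖ * g' / 2 : ℝ) : ℂ) * v + z ^ 2 * ((g' / (2 * ‖z‖) : ℝ) : ℂ) * conj v := by
  have hz' : (‖z‖ : ℂ) ≠ 0 := by exact_mod_cast norm_ne_zero_iff.2 hz
  rw [(hasFDerivAt_smul_norm hz hg).fderiv]
  simp only [add_apply, smul_apply, ContinuousLinearMap.id_apply,
    ContinuousLinearMap.smulRight_apply, innerSL_apply_apply, smul_eq_mul, Complex.inner,
    Complex.real_smul]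
  push_cast
  rw [Complex.re_eq_add_conj, map_mul, Complex.conj_conj]
  field_simp
  linear_combination (g' : ℂ) * v * Complex.mul_conj' z

end Wirtinger

theorem HasDerivAt.div_id {ρ : ℝ → ℝ} {ρ' r : ℝ} (hρ : HasDerivAt ρ ρ' r) (hr : r ≠ 0) :
    HasDerivAt (fun s => ρ s / s) ((ρ' * r - ρ r) / r ^ 2) r := by
  simpa only [mul_one] using hρ.fun_div (hasDerivAt_id' r) hr

def radialMap (ρ : ℝ → ℝ) (z : ℂ) : ℂ :=
  if z = 0 then 0 else (z / (‖z‖ : ℂ)) * (ρ ‖z‖ : ℂ)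

section RadialMap

variable {ρ : ℝ → ℝ} {ρ' : ℝ} {z : ℂ}

theorem radialMap_eventuallyEq (hz : z ≠ 0) :
    radialMap ρ =ᶠ[𝓝 z] fun w : ℂ => (ρ ‖w‖ / ‖w‖) • w := by
  filter_upwards [isOpen_compl_singleton.mem_nhds hz] with w (hw : w ≠ 0)
  rw [radialMap, if_neg hw, Complex.real_smul]
  push_cast
  ring

theorem fderiv_radialMap_apply (hz : z ≠ 0) (hρ : HasDerivAt ρ ρ' ‖z‖) (v : ℂ) :
    fderiv ℝ (radialMap ρ) z v = (((ρ ‖z‖ / ‖z‖ + ρ') / 2 : ℝ) : ℂ) * v +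
      (z / ‖z‖) ^ 2 * (((ρ' - ρ ‖z‖ / ‖z‖) / 2 : ℝ) : ℂ) * conj v := by
  have hz' : ‖z‖ ≠ 0 := norm_ne_zero_iff.2 hz
  have hz'' : (‖z‖ : ℂ) ≠ 0 := Complex.ofReal_ne_zero.2 hz'
  rw [(radialMap_eventuallyEq hz).fderiv_eq, fderiv_smul_norm_apply hz (hρ.div_id hz')]
  push_cast
  field_simp
  ring

theorem norm_wirtP_radialMap (hz : z ≠ 0) (hρ : HasDerivAt ρ ρ' ‖z‖) :
    ‖wirtP (radialMap ρ) z‖ = |ρ ‖z‖ / ‖z‖ + ρ'| / 2 := by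
  rw [wirtP_eq_of_fderiv_apply (fderiv_radialMap_apply hz hρ), Complex.norm_real,
    Real.norm_eq_abs, abs_div, abs_two]

theorem norm_wirtM_radialMap (hz : z ≠ 0) (hρ : HasDerivAt ρ ρ' ‖z‖) :
    ‖wirtM (radialMap ρ) z‖ = |ρ ‖z‖ / ‖z‖ - ρ'| / 2 := by
  rw [wirtM_eq_of_fderiv_apply (fderiv_radialMap_apply hz hρ), norm_mul, norm_pow, norm_div,
    Complex.norm_real, Complex.norm_real, Real.norm_eq_abs, Real.norm_eq_abs, abs_norm,
    div_self (norm_ne_zero_iff.2 hz), one_pow, one_mul, abs_div, abs_two, abs_sub_comm]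

end RadialMap

theorem innerDil_radialMap {ρ : ℝ → ℝ} {ρ' : ℝ} {z : ℂ} (p : ℝ) (hz : z ≠ 0)
    (hρ : HasDerivAt ρ ρ' ‖z‖) (hρ' : 0 < ρ') (hle : ‖z‖ * ρ' ≤ ρ ‖z‖) :
    innerDil p (radialMap ρ) z = ENNReal.ofReal (ρ ‖z‖ * ρ' / ‖z‖ / ρ' ^ p) := by
  have hr : 0 < ‖z‖ := norm_pos_iff.2 hz
  have hle' : ρ' ≤ ρ ‖z‖ / ‖z‖ := by rwa [le_div_iff₀ hr, mul_comm]
  have hP : ‖wirtP (radialMap ρ) z‖ = (ρ ‖z‖ / ‖z‖ + ρ') / 2 := by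
    rw [norm_wirtP_radialMap hz hρ, abs_of_pos (by linarith)]
  have hM : ‖wirtM (radialMap ρ) z‖ = (ρ ‖z‖ / ‖z‖ - ρ') / 2 := by
    rw [norm_wirtM_radialMap hz hρ, abs_of_nonneg (by linarith)]
  have hJ : ‖wirtP (radialMap ρ) z‖ ^ 2 - ‖wirtM (radialMap ρ) z‖ ^ 2 = ρ ‖z‖ * ρ' / ‖z‖ := by
    rw [hP, hM]; ring
  have hJ0 : jacF (radialMap ρ) z ≠ 0 := by
    rw [jacF, hJ]
    have hρpos : 0 < ρ ‖z‖ := (mul_pos hr hρ').trans_le hle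
    positivity
  rw [innerDil, if_pos hJ0, hJ, hP, hM,
    show (ρ ‖z‖ / ‖z‖ + ρ') / 2 - (ρ ‖z‖ / ‖z‖ - ρ') / 2 = ρ' by ring]

section Kernel

open Real

variable {α s t : ℝ}

theorem one_le_log_exp_one_div (h0 : 0 < t) (h1 : t ≤ 1) : 1 ≤ log (exp 1 / t) := by
  rw [log_div (exp_pos 1).ne' h0.ne', log_exp]
  linarith [log_nonpos h0.le h1]

theorem log_exp_one_div_antitoneOn : AntitoneOn (fun t => log (exp 1 / t)) (Ioi 0) :=
  fun _ ha _ hb hab =>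
    log_le_log (div_pos (exp_pos 1) hb) (div_le_div_of_nonneg_left (exp_pos 1).le ha hab)

theorem kern_eq_rpow (h0 : 0 < t) (h1 : t < exp 1) :
    kern α t = (t * log (exp 1 / t)) ^ (-(1 / (α - 1))) := by
  have hq : 0 < log (exp 1 / t) := log_pos ((one_lt_div h0).2 h1)
  rw [kern, rpow_neg (by positivity), mul_rpow h0.le hq.le, one_div]

theorem kern_pos (h0 : 0 < t) (h1 : t < exp 1) : 0 < kern α t := by
  have hq : 0 < log (exp 1 / t) := log_pos ((one_lt_div h0).2 h1)
  rw [kern_eq_rpow h0 h1]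
  positivity

theorem continuousOn_kern : ContinuousOn (kern α) (Ioo 0 (exp 1)) := by
  intro t ⟨h0, h1⟩
  have hq : 0 < log (exp 1 / t) := log_pos ((one_lt_div h0).2 h1)
  refine ContinuousAt.continuousWithinAt ?_
  refine continuousAt_const.div ((continuousAt_id.rpow_const (Or.inl h0.ne')).mul
    (ContinuousAt.rpow_const ?_ (Or.inl hq.ne')))
    (mul_pos (rpow_pos_of_pos h0 _) (rpow_pos_of_pos hq _)).ne'
  exact (continuousAt_const.div continuousAt_id h0.ne').log (div_pos (exp_pos 1) h0).ne'

theorem intervalIntegrable_kern (h0 : 0 < s) (h1 : s < exp 1) :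
    IntervalIntegrable (kern α) MeasureTheory.volume s 1 :=
  (continuousOn_kern.mono (ordConnected_Ioo.uIcc_subset ⟨h0, h1⟩
    ⟨one_pos, one_lt_exp_iff.2 one_pos⟩)).intervalIntegrable

theorem integral_kern_nonneg (h0 : 0 < s) (h1 : s ≤ 1) : 0 ≤ ∫ t in s..1, kern α t := by
  refine intervalIntegral.integral_nonneg h1 fun t ht => ?_
  exact (kern_pos (h0.trans_le ht.1) (ht.2.trans_lt (one_lt_exp_iff.2 one_pos))).le

theorem hasDerivAt_integral_kern (h0 : 0 < s) (h1 : s < exp 1) :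
    HasDerivAt (fun u => ∫ t in u..1, kern α t) (-kern α s) s :=
  intervalIntegral.integral_hasDerivAt_left (intervalIntegrable_kern h0 h1)
    (continuousOn_kern.stronglyMeasurableAtFilter isOpen_Ioo s ⟨h0, h1⟩)
    (continuousOn_kern.continuousAt (isOpen_Ioo.mem_nhds ⟨h0, h1⟩))

end Kernel

def rhoBase (α s : ℝ) : ℝ :=
  1 + ((2 - α) / (α - 1)) * ∫ t in s..1, kern α t

section Profile

open Real

variable {α s : ℝ}

theorem one_le_rhoBase (hα₁ : 1 < α) (hα₂ : α ≤ 2) (h0 : 0 < s) (h1 : s ≤ 1) :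
    1 ≤ rhoBase α s := by
  have hc : 0 ≤ (2 - α) / (α - 1) := div_nonneg (by linarith) (by linarith)
  have := mul_nonneg hc (integral_kern_nonneg (α := α) h0 h1)
  rw [rhoBase]
  linarith

theorem rpow_mul_sub_one_le_integral_kern (hα₁ : 1 < α) (hα₂ : α < 2) (h0 : 0 < s) (h1 : s ≤ 1) :
    log (exp 1 / s) ^ (-(1 / (α - 1))) * (s ^ (1 - 1 / (α - 1)) - 1) ≤
      (2 - α) / (α - 1) * ∫ t in s..1, kern α t := by
  set γ := 1 / (α - 1) with hγ
  set q := log (exp 1 / s)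
  have hγ1 : 1 < γ := by rw [hγ, lt_one_div (by norm_num) (by linarith)]; linarith
  have hc : (2 - α) / (α - 1) = γ - 1 := by
    rw [hγ]; field_simp [show α - 1 ≠ 0 by linarith]; ring
  have hq : 0 < q := by linarith [one_le_log_exp_one_div h0 h1]
  have hs : s < exp 1 := lt_of_le_of_lt h1 (one_lt_exp_iff.2 one_pos)
  have hlower : ∀ t ∈ Icc s 1, q ^ (-γ) * t ^ (-γ) ≤ kern α t := by
    rintro t ⟨hst, ht1⟩
    have ht0 : 0 < t := h0.trans_le hst
    have hqt : log (exp 1 / t) ≤ q := log_exp_one_div_antitoneOn h0 ht0 hst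
    have hqt0 : 0 < log (exp 1 / t) := by linarith [one_le_log_exp_one_div ht0 ht1]
    rw [kern_eq_rpow ht0 (ht1.trans_lt (one_lt_exp_iff.2 one_pos)), ← mul_rpow hq.le ht0.le,
      mul_comm q]
    exact rpow_le_rpow_of_nonpos (mul_pos ht0 hqt0) (by gcongr) (by linarith)
  have hint : ∫ t in s..1, q ^ (-γ) * t ^ (-γ) = q ^ (-γ) * ((1 - s ^ (1 - γ)) / (1 - γ)) := by
    rw [intervalIntegral.integral_const_mul, integral_rpow
      (Or.inr ⟨by linarith, by rw [uIcc_of_le h1]; exact fun h => h0.not_ge h.1⟩)]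
    rw [Real.one_rpow, neg_add_eq_sub]
  have hrpow : IntervalIntegrable (fun t => q ^ (-γ) * t ^ (-γ)) MeasureTheory.volume s 1 := by
    refine (ContinuousOn.intervalIntegrable fun t ht => ?_).const_mul _
    rw [uIcc_of_le h1] at ht
    exact (continuousAt_id.rpow_const (Or.inl (h0.trans_le ht.1).ne')).continuousWithinAt
  have hmono := intervalIntegral.integral_mono_on h1 hrpow (intervalIntegrable_kern h0 hs) hlower
  rw [hc]
  calc q ^ (-γ) * (s ^ (1 - γ) - 1) = (γ - 1) * (q ^ (-γ) * ((1 - s ^ (1 - γ)) / (1 - γ))) := by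
        field_simp [show 1 - γ ≠ 0 by linarith]
        ring
    _ ≤ (γ - 1) * ∫ t in s..1, kern α t := by
        rw [← hint]
        exact mul_le_mul_of_nonneg_left hmono (by linarith)

theorem mul_kern_le_rhoBase (hα₁ : 1 < α) (hα₂ : α < 2) (h0 : 0 < s) (h1 : s ≤ 1) :
    s * kern α s ≤ rhoBase α s := by
  set γ := 1 / (α - 1)
  set q := log (exp 1 / s)
  have hq1 : 1 ≤ q := one_le_log_exp_one_div h0 h1
  have hγ : 0 ≤ γ := div_nonneg zero_le_one (by linarith)
  have hsk : s * kern α s = q ^ (-γ) * s ^ (1 - γ) := by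
    rw [kern_eq_rpow h0 (h1.trans_lt (one_lt_exp_iff.2 one_pos)), mul_rpow h0.le (by linarith),
      Real.rpow_sub h0, Real.rpow_one, Real.rpow_neg h0.le]
    ring
  have hq : q ^ (-γ) ≤ 1 := rpow_le_one_of_one_le_of_nonpos hq1 (by linarith)
  have := rpow_mul_sub_one_le_integral_kern hα₁ hα₂ h0 h1
  rw [rhoBase, hsk]
  linarith

theorem rho_pos (hα₁ : 1 < α) (hα₂ : α < 2) (h0 : 0 < s) (h1 : s ≤ 1) : 0 < rho α s :=
  rpow_pos_of_pos (zero_lt_one.trans_le (one_le_rhoBase hα₁ hα₂.le h0 h1)) _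

theorem rho_div_rpow_eq (hα₁ : 1 < α) (hα₂ : α < 2) (h0 : 0 < s) (h1 : s ≤ 1) :
    (rho α s / (s * log (exp 1 / s))) ^ (1 / (α - 1)) = rhoBase α s ^ (1 / (α - 2)) * kern α s := by
  have hB : 0 < rhoBase α s := zero_lt_one.trans_le (one_le_rhoBase hα₁ hα₂.le h0 h1)
  have hq : 0 < log (exp 1 / s) := by linarith [one_le_log_exp_one_div h0 h1]
  rw [div_rpow (rho_pos hα₁ hα₂ h0 h1).le (by positivity), rho, ← rhoBase, ← rpow_mul hB.le,
    kern_eq_rpow h0 (h1.trans_lt (one_lt_exp_iff.2 one_pos)), rpow_neg (by positivity),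
    div_eq_mul_inv]
  congr 2
  field_simp [show α - 1 ≠ 0 by linarith]

theorem hasDerivAt_rho (hα₁ : 1 < α) (hα₂ : α < 2) (h0 : 0 < s) (h1 : s ≤ 1) :
    HasDerivAt (rho α) ((rho α s / (s * log (exp 1 / s))) ^ (1 / (α - 1))) s := by
  have hB : 0 < rhoBase α s := zero_lt_one.trans_le (one_le_rhoBase hα₁ hα₂.le h0 h1)
  have hbase : HasDerivAt (rhoBase α) ((2 - α) / (α - 1) * -kern α s) s :=
    ((hasDerivAt_integral_kern h0 (h1.trans_lt (one_lt_exp_iff.2 one_pos))).const_mul _).const_add 1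
  refine ((hasDerivAt_rpow_const (p := (α - 1) / (α - 2)) (Or.inl hB.ne')).comp s
    hbase).congr_deriv ?_
  rw [rho_div_rpow_eq hα₁ hα₂ h0 h1, show (α - 1) / (α - 2) - 1 = 1 / (α - 2) by
    field_simp [show α - 2 ≠ 0 by linarith]; ring]
  field_simp [show α - 1 ≠ 0 by linarith, show α - 2 ≠ 0 by linarith]
  ring

theorem mul_deriv_rho_le (hα₁ : 1 < α) (hα₂ : α < 2) (h0 : 0 < s) (h1 : s ≤ 1) :
    s * (rho α s / (s * log (exp 1 / s))) ^ (1 / (α - 1)) ≤ rho α s := by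
  have hB : 0 < rhoBase α s := zero_lt_one.trans_le (one_le_rhoBase hα₁ hα₂.le h0 h1)
  have hρ : rho α s = rhoBase α s ^ (1 / (α - 2)) * rhoBase α s := by
    rw [rho, ← rhoBase, ← rpow_add_one hB.ne']
    congr 1
    field_simp [show α - 2 ≠ 0 by linarith]
    ring
  rw [rho_div_rpow_eq hα₁ hα₂ h0 h1, hρ, mul_left_comm]
  exact mul_le_mul_of_nonneg_left (mul_kern_le_rhoBase hα₁ hα₂ h0 h1) (by positivity)

end Profile

theorem mul_div_rpow_eq_of_eq_rpow {α a b x : ℝ} (hα : α ≠ 1) (ha : 0 < a) (hb : 0 < b)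
    (hx : x = (a / b) ^ (1 / (α - 1))) : a * x / x ^ α = b := by
  have hx0 : 0 < x := hx ▸ Real.rpow_pos_of_pos (div_pos ha hb) _
  have hxα : x ^ α = x * (a / b) := by
    rw [show α = 1 + (α - 1) by ring, Real.rpow_add hx0, Real.rpow_one, hx, ← Real.rpow_mul
      (div_pos ha hb).le, one_div_mul_cancel (sub_ne_zero.2 hα), Real.rpow_one]
  rw [hxα]
  field_simp

theorem fmap_innerDil
    (α : ℝ) (hα₁ : 1 < α) (hα₂ : α < 2)
    (z : ℂ) (hz : z ∈ Metric.ball (0:ℂ) 1) (hz0 : z ≠ 0) :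
    innerDil α (fmap α) z = ENNReal.ofReal (Real.log (Real.exp 1 / ‖z‖)) := by
  have hs0 : 0 < ‖z‖ := norm_pos_iff.2 hz0
  have hs1 : ‖z‖ ≤ 1 := (mem_ball_zero_iff.1 hz).le
  have hq : 0 < Real.log (Real.exp 1 / ‖z‖) := by linarith [one_le_log_exp_one_div hs0 hs1]
  have hρ := rho_pos hα₁ hα₂ hs0 hs1
  rw [show fmap α = radialMap (rho α) from rfl,
    innerDil_radialMap α hz0 (hasDerivAt_rho hα₁ hα₂ hs0 hs1) (by positivity)
      (mul_deriv_rho_le hα₁ hα₂ hs0 hs1),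
    div_right_comm, mul_div_rpow_eq_of_eq_rpow hα₁.ne' hρ (by positivity) rfl,
    mul_div_cancel_left₀ _ hs0.ne']
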